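/- arXiv:2106.04039 — 5 statements merged into one kernel-verified Lean document; each statement's English description precedes it below -/
import Mathlib

section
/- Let d ≥ 1 and let φ : ℝ^d → ℂ be a nonzero infinitely differentiable function with compact support. Then the family of all translates of φ, indexed by h ∈ ℝ^d and given by τ_h φ : x ↦ φ(x − h), is linearly independent over ℂ. -/
open MeasureTheory Finset Matrix

theorem stmt_12 (d : ℕ) (hd : 1 ≤ d) (φ : (Fin d → ℝ) → ℂ)
    (h1 : ContDiff ℝ (⊤ : ℕ∞) φ) (h2 : HasCompactSupport φ) (h3 : φ ≠ 0) :
    LinearIndependent ℂ (fun h : Fin d → ℝ => (fun x : Fin d → ℝ => φ (x - h))) := by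
  rw [linearIndependent_iff']
  intro s g hsum i his
  by_contra hgi
  set t : Finset (Fin d → ℝ) := s.filter (fun h => g h ≠ 0) with ht
  have hts : t ⊆ s := filter_subset _ _
  have hit : i ∈ t := mem_filter.2 ⟨his, hgi⟩
  have htne : t.Nonempty := ⟨i, hit⟩
  -- generic direction v
  have hvex : ∃ v : Fin d → ℝ, ∀ a ∈ t, ∀ b ∈ t, a ≠ b → a ⬝ᵥ v ≠ b ⬝ᵥ v := by
    set L : (Fin d → ℝ) → (Fin d → ℝ) →ₗ[ℝ] ℝ := fun w =>
      { toFun := fun v => w ⬝ᵥ v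
        map_add' := fun x y => dotProduct_add w x y
        map_smul' := fun c x => dotProduct_smul c w x } with hL
    set P : Finset ((Fin d → ℝ) × (Fin d → ℝ)) := (t ×ˢ t).filter (fun p => p.1 ≠ p.2) with hP
    set B : Set (Fin d → ℝ) := ⋃ p ∈ (P : Set ((Fin d → ℝ) × (Fin d → ℝ))), (LinearMap.ker (L (p.1 - p.2)) : Set (Fin d → ℝ)) with hB
    have hBnull : volume B = 0 := by
      refine (measure_biUnion_null_iff (P.countable_toSet)).2 ?_
      rintro ⟨a, b⟩ hp
      simp only [hP, Finset.coe_filter, Set.mem_setOf_eq, Finset.mem_coe, Finset.mem_product] at hp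
      have hab : a - b ≠ 0 := sub_ne_zero.2 hp.2
      refine Measure.addHaar_submodule volume _ ?_
      intro hker
      have : (a - b) ⬝ᵥ (a - b) = 0 := by
        have := hker ▸ (Submodule.mem_top (R := ℝ) (x := a - b))
        have h0 := LinearMap.mem_ker.1 this; simp only [hL, LinearMap.coe_mk, AddHom.coe_mk] at h0; linarith [h0, (sub_dotProduct a b (a-b)), (dotProduct_sub a a b), (dotProduct_sub b a b)]
      exact hab (by simpa using (dotProduct_self_eq_zero).1 this)
    have hBne : B ≠ Set.univ := by
      intro h
      have : volume (Set.univ : Set (Fin d → ℝ)) = 0 := h ▸ hBnull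
      exact (IsOpen.measure_ne_zero volume isOpen_univ Set.univ_nonempty) this
    have : ∃ v, v ∉ B := by
      by_contra h
      push_neg at h
      exact hBne (Set.eq_univ_of_forall h)
    obtain ⟨v, hv⟩ := this
    refine ⟨v, fun a ha b hb hab heq => hv ?_⟩
    have hpP : (a, b) ∈ P := by simp [hP, Finset.mem_product, ha, hb, hab]
    refine Set.mem_biUnion (by exact_mod_cast hpP) ?_
    simp only [SetLike.mem_coe, LinearMap.mem_ker]
    simp [hL, sub_dotProduct, heq]
  obtain ⟨v, hv⟩ := hvex
  set f : (Fin d → ℝ) → ℝ := fun x => x ⬝ᵥ v with hf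
  have hfc : Continuous f := by
    simp only [hf, dotProduct]
    exact continuous_finset_sum _ (fun k _ => ((continuous_apply k).mul continuous_const))
  obtain ⟨j, hjt, hjmax⟩ := t.exists_max_image f htne
  set E : Finset ℝ := insert (1:ℝ) ((t.erase j).image (fun i => f j - f i)) with hE
  have hEne : E.Nonempty := insert_nonempty _ _
  set ε : ℝ := E.min' hEne with hε
  have hεpos : 0 < ε := by
    rw [hε, Finset.lt_min'_iff]
    intro y hy
    rw [hE, Finset.mem_insert] at hy
    rcases hy with rfl | hy
    · norm_num
    · obtain ⟨a, ha, rfl⟩ := Finset.mem_image.1 hy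
      have ha' := Finset.mem_of_mem_erase ha
      have h1 : f a ≤ f j := hjmax a ha'
      have h2 : f a ≠ f j := hv a ha' j hjt (Finset.ne_of_mem_erase ha)
      have := lt_of_le_of_ne h1 h2
      linarith
  have hεle : ∀ a ∈ t.erase j, ε ≤ f j - f a := by
    intro a ha
    exact Finset.min'_le _ _ (by rw [hE]; exact Finset.mem_insert_of_mem (Finset.mem_image_of_mem _ ha))
  -- supremum of f over the support
  have hsupp_ne : (Function.support φ).Nonempty := Function.support_nonempty_iff.2 h3
  have hts_ne : (tsupport φ).Nonempty := hsupp_ne.mono subset_closure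
  have hcpt : IsCompact (tsupport φ) := h2
  have himg : IsCompact (f '' tsupport φ) := hcpt.image hfc
  have himg_ne : (f '' tsupport φ).Nonempty := hts_ne.image f
  set M : ℝ := sSup (f '' tsupport φ) with hM
  have hub : ∀ x ∈ tsupport φ, f x ≤ M :=
    fun x hx => le_csSup himg.bddAbove ⟨x, hx, rfl⟩
  obtain ⟨y, hy, hylt⟩ := exists_lt_of_lt_csSup himg_ne (show M - ε < M by linarith)
  obtain ⟨x₁, hx₁, rfl⟩ := hy
  -- find x₀ in the support with f x₀ > M - ε
  have hx₁cl : x₁ ∈ closure (Function.support φ) := hx₁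
  obtain ⟨x₀, hx₀U, hx₀s⟩ := mem_closure_iff.1 hx₁cl (f ⁻¹' Set.Ioi (M - ε))
    (hfc.isOpen_preimage _ isOpen_Ioi) hylt
  have hφx₀ : φ x₀ ≠ 0 := hx₀s
  have hfx₀ : M - ε < f x₀ := hx₀U
  -- evaluate the relation at x₀ + j
  have heval : ∑ h ∈ s, g h * φ (x₀ + j - h) = 0 := by
    have := congrFun hsum (x₀ + j)
    simpa [Finset.sum_apply, Pi.smul_apply, smul_eq_mul] using this
  have hst : ∑ h ∈ t, g h * φ (x₀ + j - h) = ∑ h ∈ s, g h * φ (x₀ + j - h) := by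
    refine Finset.sum_subset hts (fun x hx hxt => ?_)
    have : g x = 0 := by
      by_contra h
      exact hxt (mem_filter.2 ⟨hx, h⟩)
    simp [this]
  have hsingle : ∑ h ∈ t, g h * φ (x₀ + j - h) = g j * φ x₀ := by
    rw [Finset.sum_eq_single j]
    · simp
    · intro b hb hbj
      have hbe : b ∈ t.erase j := Finset.mem_erase.2 ⟨hbj, hb⟩
      have hfb : M < f (x₀ + j - b) := by
        have : f (x₀ + j - b) = f x₀ + f j - f b := by
          simp [hf, add_dotProduct, sub_dotProduct]
        rw [this]
        have := hεle b hbe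
        linarith
      have : x₀ + j - b ∉ tsupport φ := fun hmem => absurd (hub _ hmem) (not_le.2 hfb)
      rw [image_eq_zero_of_notMem_tsupport this, mul_zero]
    · intro hj; exact absurd hjt hj
  have : g j * φ x₀ = 0 := by rw [← hsingle, hst]; exact heval
  rcases mul_eq_zero.1 this with h | h
  · exact (mem_filter.1 hjt).2 h
  · exact hφx₀ h
end

section
/- An infinite-dimensional complex Hilbert space has no orthonormal Hamel basis: if H is a complex inner product space that is complete and not finite dimensional over ℂ, then there is no algebraic basis b : Basis ι ℂ H of H whose family of vectors is orthonormal. -/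
/-!
For an orthonormal Hamel basis the coordinates of a vector are its inner products with the basis
vectors, so only finitely many of them are nonzero. In a complete space with an infinite
orthonormal family `(eₙ)`, the convergent series `∑ 2⁻ⁿ eₙ` has infinitely many nonzero inner
products, so the index set is finite.
-/

open scoped InnerProductSpace

section

variable {𝕜 E ι : Type*} [RCLike 𝕜] [NormedAddCommGroup E] [InnerProductSpace 𝕜 E]

theorem Orthonormal.inner_tsum_smul_right {v : ι → E} (hv : Orthonormal 𝕜 v) {c : ι → 𝕜}
    (hc : Summable fun j => c j • v j) (i : ι) : ⟪v i, ∑' j, c j • v j⟫_𝕜 = c i := by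
  classical
  refine (hc.hasSum.mapL (innerSL 𝕜 (v i))).unique ?_
  convert hasSum_ite_eq i (c i) using 2 with j
  rw [innerSL_apply_apply, inner_smul_right, orthonormal_iff_ite.mp hv]
  rcases eq_or_ne j i with rfl | hji
  · simp
  · simp [hji, hji.symm]

theorem Orthonormal.summable_smul_of_summable_norm [CompleteSpace E] {v : ι → E}
    (hv : Orthonormal 𝕜 v) {c : ι → 𝕜} (hc : Summable fun j => ‖c j‖) :
    Summable fun j => c j • v j :=
  .of_norm <| by simpa only [norm_smul, hv.1, mul_one] using hc

theorem Orthonormal.exists_forall_inner_ne_zero [CompleteSpace E] {e : ℕ → E}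
    (he : Orthonormal 𝕜 e) : ∃ x : E, ∀ n, ⟪e n, x⟫_𝕜 ≠ 0 := by
  have hsum : Summable fun n => ((2⁻¹ : 𝕜) ^ n) • e n :=
    he.summable_smul_of_summable_norm <| by
      simpa only [norm_pow, norm_inv, RCLike.norm_ofNat, one_div] using summable_geometric_two
  refine ⟨∑' n, ((2⁻¹ : 𝕜) ^ n) • e n, fun n => ?_⟩
  rw [he.inner_tsum_smul_right hsum n]
  exact pow_ne_zero n (by norm_num)

theorem Module.Basis.repr_apply_eq_inner_of_orthonormal (b : Module.Basis ι 𝕜 E)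
    (hb : Orthonormal 𝕜 b) (x : E) (i : ι) : b.repr x i = ⟪b i, x⟫_𝕜 := by
  conv_rhs => rw [← b.linearCombination_repr x]
  exact (hb.inner_right_finsupp (b.repr x) i).symm

theorem Module.Basis.finite_of_orthonormal [CompleteSpace E] (b : Module.Basis ι 𝕜 E)
    (hb : Orthonormal 𝕜 b) : Finite ι := by
  by_contra hfin
  have : Infinite ι := not_finite_iff_infinite.mp hfin
  let f := Infinite.natEmbedding ι
  obtain ⟨x, hx⟩ := (hb.comp f f.injective).exists_forall_inner_ne_zero
  have hrange : Set.range f ⊆ (b.repr x).support := by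
    rintro _ ⟨n, rfl⟩
    simpa [b.repr_apply_eq_inner_of_orthonormal hb] using hx n
  exact Set.infinite_range_of_injective f.injective ((b.repr x).support.finite_toSet.subset hrange)

end

theorem stmt_14 (H : Type*) [NormedAddCommGroup H] [InnerProductSpace ℂ H]
    [CompleteSpace H] (h : ¬ FiniteDimensional ℂ H)
    (ι : Type*) (b : Module.Basis ι ℂ H) :
    ¬ Orthonormal ℂ (fun i => b i) := by
  intro hb
  have := b.finite_of_orthonormal hb
  exact h (Module.Finite.of_basis b)
end

section
/- Let H be an infinite-dimensional separable complex Hilbert space. Then the Hamel dimension of H over ℂ equals the cardinality of the continuum: Module.rank ℂ H = 𝔠 (and likewise the cardinality of H equals 𝔠). -/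
/-!
A separable Hausdorff first-countable space has at most `ℵ₀ ^ ℵ₀ = 𝔠` points, since each point is
the limit of a sequence in a fixed countable dense set; and the Hamel dimension is at most the
cardinality. Conversely, an infinite orthonormal sequence embeds `ℓ²` isometrically, and in `ℓ²`
the geometric sequences `(cⁿ)` with `‖c‖ < 1` are linearly independent by Dedekind's independence
of characters (they are the monoid homomorphisms `ℕ → ℂ`), giving `#ℂ = 𝔠` independent vectors.
-/

open Cardinal Filter Topology
open scoped ENNReal

theorem Cardinal.mk_le_continuum_of_separableSpace (X : Type*) [TopologicalSpace X] [T2Space X]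
    [FirstCountableTopology X] [TopologicalSpace.SeparableSpace X] : #X ≤ 𝔠 := by
  obtain ⟨D, hD, hDense⟩ := TopologicalSpace.exists_countable_dense X
  have : Countable D := hD.to_subtype
  have hseq (x : X) : ∃ u : ℕ → D, Tendsto (fun n ↦ (u n : X)) atTop (𝓝 x) := by
    obtain ⟨u, huD, hux⟩ := mem_closure_iff_seq_limit.mp (hDense.closure_eq ▸ Set.mem_univ x)
    exact ⟨fun n ↦ ⟨u n, huD n⟩, hux⟩
  choose u hu using hseq
  have hu_inj : Function.Injective u := fun x y hxy ↦
    tendsto_nhds_unique (hu x) (hxy ▸ hu y)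
  calc #X ≤ #(ℕ → D) := mk_le_of_injective hu_inj
    _ ≤ 𝔠 := by
      rw [mk_arrow, mk_nat, lift_aleph0]
      exact (power_le_power_right (lift_le_aleph0.2 mk_le_aleph0)).trans aleph0_power_aleph0.le

theorem memℓp_geometric {𝕜 : Type*} [NormedField 𝕜] {c : 𝕜} (hc : ‖c‖ < 1)
    {p : ℝ≥0∞} (hp : p ≠ 0) : Memℓp (fun n : ℕ ↦ c ^ n) p := by
  rcases p.trichotomy with rfl | rfl | hp_pos
  · exact absurd rfl hp
  · refine memℓp_infty ⟨1, ?_⟩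
    rintro _ ⟨n, rfl⟩
    simpa [norm_pow] using pow_le_one₀ (norm_nonneg c) hc.le
  · refine memℓp_gen ?_
    simp_rw [norm_pow, ← Real.rpow_natCast, ← Real.rpow_mul (norm_nonneg c), mul_comm _ p.toReal,
      Real.rpow_mul (norm_nonneg c), Real.rpow_natCast]
    exact summable_geometric_of_lt_one (by positivity)
      (Real.rpow_lt_one (norm_nonneg c) hc hp_pos)

theorem linearIndependent_geometric (K : Type*) [Field K] :
    LinearIndependent K (fun c : K ↦ fun n : ℕ ↦ c ^ n) :=
  (linearIndependent_monoidHom (Multiplicative ℕ) K).comp (powersHom K) (powersHom K).injective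

theorem cardinal_le_rank_lp (𝕜 : Type*) [NontriviallyNormedField 𝕜] {p : ℝ≥0∞} (hp : p ≠ 0) :
    #𝕜 ≤ Module.rank 𝕜 (lp (fun _ : ℕ ↦ 𝕜) p) := by
  let geom (c : Metric.ball (0 : 𝕜) 1) : lp (fun _ : ℕ ↦ 𝕜) p :=
    ⟨fun n ↦ (c : 𝕜) ^ n, memℓp_geometric (mem_ball_zero_iff.mp c.2) hp⟩
  have hgeom : LinearIndependent 𝕜 geom :=
    .of_comp (LinearMap.pi (lp.evalₗ _ p))
      ((linearIndependent_geometric 𝕜).comp _ Subtype.val_injective)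
  rw [← cardinal_eq_of_mem_nhds_zero 𝕜 (Metric.ball_mem_nhds 0 one_pos)]
  exact hgeom.cardinal_le_rank

theorem InnerProductSpace.nonempty_linearIsometry_lp_two (𝕜 E : Type*) [RCLike 𝕜]
    [NormedAddCommGroup E] [InnerProductSpace 𝕜 E] [CompleteSpace E]
    (hE : ¬ FiniteDimensional 𝕜 E) : Nonempty (lp (fun _ : ℕ ↦ 𝕜) 2 →ₗᵢ[𝕜] E) := by
  obtain ⟨w, b, hbw⟩ := exists_hilbertBasis 𝕜 E
  have : Infinite w := by
    refine Set.infinite_coe_iff.mpr fun hw ↦ hE ?_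
    have : Fintype w := hw.fintype
    exact .of_basis b.toOrthonormalBasis.toBasis
  have he : Orthonormal 𝕜 (fun n ↦ (Infinite.natEmbedding w n : E)) :=
    (hbw ▸ b.orthonormal).comp _ (Infinite.natEmbedding w).injective
  exact ⟨he.orthogonalFamily.linearIsometry⟩

theorem stmt_15 (H : Type*) [NormedAddCommGroup H] [InnerProductSpace ℂ H]
    [CompleteSpace H] [TopologicalSpace.SeparableSpace H]
    (h : ¬ FiniteDimensional ℂ H) :
    Module.rank ℂ H = Cardinal.continuum ∧ Cardinal.mk H = Cardinal.continuum := by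
  obtain ⟨Φ⟩ := InnerProductSpace.nonempty_linearIsometry_lp_two ℂ H h
  have hlower : 𝔠 ≤ Module.rank ℂ H := by
    have hlp := cardinal_le_rank_lp ℂ (p := 2) two_ne_zero
    rw [mk_complex] at hlp
    simpa using (lift_le.2 hlp).trans (Φ.toLinearMap.lift_rank_le_of_injective Φ.injective)
  have hupper : #H ≤ 𝔠 := mk_le_continuum_of_separableSpace H
  have hrank : Module.rank ℂ H ≤ #H := rank_le_card ℂ H
  exact ⟨le_antisymm (hrank.trans hupper) hlower, le_antisymm hupper (hlower.trans hrank)⟩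
end

section
/- The transpose of the Hans Lewy operator is injective on test functions on ℝ³: if φ : ℝ³ → ℂ is infinitely differentiable with compact support and satisfies ∂φ/∂x₁ (x) + i·∂φ/∂x₂ (x) − 2i·(x₁ + i·x₂)·∂φ/∂x₃ (x) = 0 for all x = (x₁, x₂, x₃) ∈ ℝ³, then φ = 0. -/
open MeasureTheory FourierTransform Real Set Metric Function

noncomputable def lewyJ : (ℝ × ℝ) →L[ℝ] (ℝ × ℝ × ℝ) :=
  (ContinuousLinearMap.fst ℝ ℝ ℝ).prod ((ContinuousLinearMap.snd ℝ ℝ ℝ).prod 0)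

@[simp] lemma lewyJ_apply (v : ℝ × ℝ) : lewyJ v = (v.1, v.2, 0) := rfl

set_option maxHeartbeats 1000000 in
set_option synthInstance.maxHeartbeats 400000 in
lemma lewy_param (φ : ℝ × ℝ × ℝ → ℂ) (h1 : ContDiff ℝ (⊤ : ℕ∞) φ) (h2 : HasCompactSupport φ)
    (τ : ℝ) (p : ℝ × ℝ) :
    HasFDerivAt (fun q : ℝ × ℝ => 𝓕 (fun t => φ (q.1, q.2, t)) τ)
      (∫ t : ℝ, Complex.exp ((↑(-2 * π * (t * τ)) : ℂ) * Complex.I) •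
        ((fderiv ℝ φ (p.1, p.2, t)).comp lewyJ)) p := by
  have hφc : Continuous φ := h1.continuous
  have hfd : Differentiable ℝ φ := h1.differentiable (by simp)
  have hfdc : Continuous (fderiv ℝ φ) := h1.continuous_fderiv (by simp)
  obtain ⟨C, hC⟩ := hfdc.bounded_above_of_compact_support (h2.fderiv (𝕜 := ℝ))
  have hC0 : 0 ≤ C := le_trans (norm_nonneg _) (hC 0)
  set K3 : Set ℝ := (fun q : ℝ × ℝ × ℝ => q.2.2) '' tsupport φ with hK3def
  have hK3 : IsCompact K3 := h2.image (continuous_snd.comp continuous_snd)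
  have hmemK3 : ∀ (x y t : ℝ), t ∉ K3 → (x, y, t) ∉ tsupport φ := by
    intro x y t ht hmem; exact ht ⟨(x, y, t), hmem, rfl⟩
  -- exp kernel
  set c : ℝ → ℂ := fun t => Complex.exp ((↑(-2 * π * (t * τ)) : ℂ) * Complex.I) with hcdef
  have hc_cont : Continuous c := by
    apply Complex.continuous_exp.comp; fun_prop
  have hc_norm : ∀ t, ‖c t‖ = 1 := fun t => Complex.norm_exp_ofReal_mul_I _
  -- the inner affine map
  have hι : ∀ (t : ℝ) (q : ℝ × ℝ), HasFDerivAt (fun q : ℝ × ℝ => (q.1, q.2, t)) lewyJ q :=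
    fun t q => (hasFDerivAt_fst.prodMk (hasFDerivAt_snd.prodMk (hasFDerivAt_const t q)))
  have key : HasFDerivAt (fun q : ℝ × ℝ => ∫ t : ℝ, c t • φ (q.1, q.2, t))
      (∫ t : ℝ, c t • ((fderiv ℝ φ (p.1, p.2, t)).comp lewyJ)) p := by
    apply hasFDerivAt_integral_of_dominated_of_fderiv_le (hs := Metric.ball_mem_nhds p one_pos)
      (bound := K3.indicator fun _ => C)
      (F' := fun q t => c t • ((fderiv ℝ φ (q.1, q.2, t)).comp lewyJ))
    · filter_upwards with q
      exact ((hc_cont.smul (hφc.comp ((continuous_const.prodMk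
        (continuous_const.prodMk continuous_id))))).aestronglyMeasurable)
    · apply Continuous.integrable_of_hasCompactSupport
      · exact hc_cont.smul (hφc.comp (continuous_const.prodMk
          (continuous_const.prodMk continuous_id)))
      · apply HasCompactSupport.intro hK3
        intro t ht
        have : φ (p.1, p.2, t) = 0 := image_eq_zero_of_notMem_tsupport (hmemK3 _ _ _ ht)
        simp [this]
    · apply Continuous.aestronglyMeasurable
      apply hc_cont.smul
      exact ((ContinuousLinearMap.compL ℝ (ℝ × ℝ) (ℝ × ℝ × ℝ) ℂ).flip lewyJ).continuous.comp
        (hfdc.comp (continuous_const.prodMk (continuous_const.prodMk continuous_id)))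
    · filter_upwards with t q _
      rw [norm_smul (c t) ((fderiv ℝ φ (q.1, q.2, t)).comp lewyJ), hc_norm, one_mul]
      by_cases ht : t ∈ K3
      · rw [indicator_of_mem ht]
        apply ContinuousLinearMap.opNorm_le_bound _ hC0
        intro v
        calc ‖(fderiv ℝ φ (q.1, q.2, t)).comp lewyJ v‖
            = ‖fderiv ℝ φ (q.1, q.2, t) (lewyJ v)‖ := rfl
          _ ≤ ‖fderiv ℝ φ (q.1, q.2, t)‖ * ‖lewyJ v‖ := ContinuousLinearMap.le_opNorm _ _
          _ ≤ C * ‖v‖ := by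
              apply mul_le_mul (hC _) ?_ (norm_nonneg _) hC0
              rw [lewyJ_apply]
              simp only [Prod.norm_def, norm_zero]
              exact max_le (le_max_left _ _)
                (max_le (le_max_right _ _) (le_trans (norm_nonneg _) (le_max_right _ _)))
      · rw [indicator_of_notMem ht]
        have : fderiv ℝ φ (q.1, q.2, t) = 0 := by
          have := support_fderiv_subset (𝕜 := ℝ) (f := φ)
          by_contra hne
          exact hmemK3 _ _ _ ht (this hne)
        simp [this]
    · rw [integrable_indicator_iff hK3.measurableSet]
      exact integrableOn_const hK3.measure_lt_top.ne
    · filter_upwards with t q _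
      exact ((hfd _).hasFDerivAt.comp q (hι t q)).const_smul (c t)
  have heq : (fun q : ℝ × ℝ => 𝓕 (fun t => φ (q.1, q.2, t)) τ)
      = fun q : ℝ × ℝ => ∫ t : ℝ, c t • φ (q.1, q.2, t) := by
    ext q
    rw [Real.fourier_eq']
    simp [RCLike.inner_apply, conj_trivial, hcdef]
    congr 1; ext v; ring_nf
  rw [heq]
  exact key

set_option maxHeartbeats 1000000 in
lemma lewy_cr {Ψ : ℝ × ℝ → ℂ} {L : ℝ × ℝ → (ℝ × ℝ) →L[ℝ] ℂ} {τ : ℝ}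
    (hΨ : ∀ p, HasFDerivAt Ψ (L p) p)
    (hrel : ∀ p : ℝ × ℝ, L p (1, 0) + Complex.I * L p (0, 1)
      = -((4 * π * τ : ℝ) : ℂ) * ((p.1 : ℂ) + (p.2 : ℂ) * Complex.I) * Ψ p) :
    Differentiable ℂ (fun w : ℂ =>
      Ψ (w.re, w.im) * Complex.exp (((2 * π * τ : ℝ) : ℂ) * ((w.re : ℂ) * (w.re : ℂ) + (w.im : ℂ) * (w.im : ℂ)))) := by
  intro w
  set k : ℂ := ((2 * π * τ : ℝ) : ℂ) with hk
  set p : ℝ × ℝ := (w.re, w.im) with hp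
  set e1 : (ℝ × ℝ) →L[ℝ] ℂ := Complex.ofRealCLM.comp (ContinuousLinearMap.fst ℝ ℝ ℝ) with he1
  set e2 : (ℝ × ℝ) →L[ℝ] ℂ := Complex.ofRealCLM.comp (ContinuousLinearMap.snd ℝ ℝ ℝ) with he2
  have h1 : HasFDerivAt (fun q : ℝ × ℝ => ((q.1 : ℂ))) e1 p :=
    Complex.ofRealCLM.hasFDerivAt.comp p hasFDerivAt_fst
  have h2 : HasFDerivAt (fun q : ℝ × ℝ => ((q.2 : ℂ))) e2 p :=
    Complex.ofRealCLM.hasFDerivAt.comp p hasFDerivAt_snd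
  have hρ := ((h1.mul h1).add (h2.mul h2)).const_mul k
  have hE := (Complex.hasDerivAt_exp (k * ((p.1:ℂ) * (p.1:ℂ) + (p.2:ℂ) * (p.2:ℂ)))).comp_hasFDerivAt p hρ
  have hG := (hΨ p).mul hE
  have hcoe : HasFDerivAt (fun w : ℂ => ((w.re, w.im) : ℝ × ℝ))
      (Complex.equivRealProdCLM : ℂ →L[ℝ] ℝ × ℝ) w :=
    Complex.equivRealProdCLM.hasFDerivAt
  have hg := hG.comp w hcoe
  have key : ∀ (M : ℂ →L[ℝ] ℂ),
      HasFDerivAt (fun w : ℂ =>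
        Ψ (w.re, w.im) * Complex.exp (k * ((w.re : ℂ) * (w.re : ℂ) + (w.im : ℂ) * (w.im : ℂ)))) M w →
      M Complex.I = Complex.I * M 1 →
      DifferentiableAt ℂ (fun w : ℂ =>
        Ψ (w.re, w.im) * Complex.exp (k * ((w.re : ℂ) * (w.re : ℂ) + (w.im : ℂ) * (w.im : ℂ)))) w := by
    intro M hM hCR
    refine ⟨(M 1) • (ContinuousLinearMap.id ℂ ℂ), hasFDerivAt_of_restrictScalars ℝ hM ?_⟩
    ext z
    show M 1 • z = M z
    have hz : z = z.re • (1:ℂ) + z.im • Complex.I := by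
      simp [Complex.real_smul, Complex.re_add_im]
    rw [hz, M.map_add, M.map_smul, M.map_smul, hCR]
    simp only [Complex.real_smul, smul_eq_mul]
    ring
  apply key _ hg
  have hres := hrel p
  have hIc : (Complex.equivRealProdCLM : ℂ →L[ℝ] ℝ × ℝ) Complex.I = (0, 1) := rfl
  have h1c : (Complex.equivRealProdCLM : ℂ →L[ℝ] ℝ × ℝ) 1 = (1, 0) := rfl
  simp only [Function.comp, ContinuousLinearMap.coe_comp', ContinuousLinearMap.add_apply,
    ContinuousLinearMap.coe_smul', Pi.smul_apply, ContinuousLinearMap.comp_apply,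
    Complex.equivRealProdCLM_apply, Complex.I_re, Complex.I_im, Complex.one_re, Complex.one_im,
    ContinuousLinearMap.smul_apply, he1, he2,
    ContinuousLinearMap.coe_fst', ContinuousLinearMap.coe_snd',
    Complex.ofRealCLM_apply, smul_eq_mul, Complex.ofReal_one, Complex.ofReal_zero,
    hIc, h1c, Complex.ofReal_mul, Complex.ofReal_ofNat, hk] at hres ⊢
  set E : ℂ := Complex.exp (2 * (π:ℂ) * (τ:ℂ) * ((w.re:ℂ) * (w.re:ℂ) + (w.im:ℂ) * (w.im:ℂ))) with hE'
  linear_combination (-Complex.I * E) * hres +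
    (Ψ p * E * (π:ℂ) * (τ:ℂ) * (w.im:ℂ) * 4 + E * (L p) (0, 1)) * Complex.I_sq

theorem stmt_16 (φ : ℝ × ℝ × ℝ → ℂ) (h1 : ContDiff ℝ (⊤ : ℕ∞) φ)
    (h2 : HasCompactSupport φ)
    (h : ∀ x : ℝ × ℝ × ℝ,
      fderiv ℝ φ x (1, 0, 0) + Complex.I * fderiv ℝ φ x (0, 1, 0)
        - 2 * Complex.I * ((x.1 : ℂ) + Complex.I * (x.2.1 : ℂ)) * fderiv ℝ φ x (0, 0, 1)
          = 0) :
    φ = 0 := by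
  have hφc : Continuous φ := h1.continuous
  have hfd : Differentiable ℝ φ := h1.differentiable (by simp)
  have hfdc : Continuous (fderiv ℝ φ) := h1.continuous_fderiv (by simp)
  set K3 : Set ℝ := (fun q : ℝ × ℝ × ℝ => q.2.2) '' tsupport φ with hK3def
  have hK3 : IsCompact K3 := h2.image (continuous_snd.comp continuous_snd)
  have hmemK3 : ∀ x y t : ℝ, t ∉ K3 → (x, y, t) ∉ tsupport φ := by
    intro x y t ht hmem; exact ht ⟨(x, y, t), hmem, rfl⟩
  have hιc : ∀ x y : ℝ, Continuous (fun t : ℝ => ((x, y, t) : ℝ × ℝ × ℝ)) :=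
    fun x y => continuous_const.prodMk (continuous_const.prodMk continuous_id)
  have hslice_cont : ∀ x y : ℝ, Continuous (fun t => φ (x, y, t)) :=
    fun x y => hφc.comp (hιc x y)
  have hslice_cs : ∀ x y : ℝ, HasCompactSupport (fun t => φ (x, y, t)) := by
    intro x y
    apply HasCompactSupport.intro hK3
    intro t ht
    exact image_eq_zero_of_notMem_tsupport (hmemK3 x y t ht)
  have hslice_int : ∀ x y : ℝ, Integrable (fun t => φ (x, y, t)) :=
    fun x y => (hslice_cont x y).integrable_of_hasCompactSupport (hslice_cs x y)
  have hslice_deriv : ∀ x y t : ℝ,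
      HasDerivAt (fun t => φ (x, y, t)) (fderiv ℝ φ (x, y, t) (0, 0, 1)) t :=
    fun x y t => (hfd (x, y, t)).hasFDerivAt.comp_hasDerivAt t
      ((hasDerivAt_const t x).prodMk ((hasDerivAt_const t y).prodMk (hasDerivAt_id t)))
  have hD3cont : Continuous (fun q : ℝ × ℝ × ℝ => fderiv ℝ φ q (0, 0, 1)) :=
    hfdc.clm_apply continuous_const
  have hD3int : ∀ x y : ℝ, Integrable (fun t => fderiv ℝ φ (x, y, t) (0, 0, 1)) := by
    intro x y
    apply Continuous.integrable_of_hasCompactSupport (hD3cont.comp (hιc x y))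
    apply HasCompactSupport.intro hK3
    intro t ht
    have : fderiv ℝ φ (x, y, t) = 0 := by
      by_contra hne
      exact hmemK3 x y t ht (support_fderiv_subset ℝ hne)
    simp [Function.comp, this]
  -- Fourier transform of the t-derivative
  have key1 : ∀ x y τ : ℝ,
      𝓕 (fun t => fderiv ℝ φ (x, y, t) (0, 0, 1)) τ
        = (2 * π * Complex.I * τ) • 𝓕 (fun t => φ (x, y, t)) τ := by
    intro x y τ
    have hde : deriv (fun t => φ (x, y, t)) = fun t => fderiv ℝ φ (x, y, t) (0, 0, 1) :=
      funext fun t => (hslice_deriv x y t).deriv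
    have := Real.fourier_deriv (hslice_int x y)
      (fun t => (hslice_deriv x y t).differentiableAt) (hde ▸ hD3int x y)
    rw [hde] at this
    exact congrFun this τ
  -- main claim: Fourier transform in t vanishes identically
  have main : ∀ (τ : ℝ) (x y : ℝ), 𝓕 (fun t => φ (x, y, t)) τ = 0 := by
    intro τ
    set c : ℝ → ℂ := fun t => Complex.exp ((↑(-2 * π * (t * τ)) : ℂ) * Complex.I) with hcdef
    have hc_cont : Continuous c := by
      apply Complex.continuous_exp.comp; fun_prop
    set Ψ : ℝ × ℝ → ℂ := fun p => 𝓕 (fun t => φ (p.1, p.2, t)) τ with hΨdef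
    set L : ℝ × ℝ → (ℝ × ℝ) →L[ℝ] ℂ :=
      fun p => ∫ t : ℝ, c t • ((fderiv ℝ φ (p.1, p.2, t)).comp lewyJ) with hLdef
    have hΨ : ∀ p, HasFDerivAt Ψ (L p) p := fun p => lewy_param φ h1 h2 τ p
    have hF'int : ∀ p : ℝ × ℝ,
        Integrable (fun t => c t • ((fderiv ℝ φ (p.1, p.2, t)).comp lewyJ)) := by
      intro p
      apply Continuous.integrable_of_hasCompactSupport
      · exact hc_cont.smul
          (((ContinuousLinearMap.compL ℝ (ℝ × ℝ) (ℝ × ℝ × ℝ) ℂ).flip lewyJ).continuous.comp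
            (hfdc.comp (hιc p.1 p.2)))
      · apply HasCompactSupport.intro hK3
        intro t ht
        have hz : fderiv ℝ φ (p.1, p.2, t) = 0 := by
          by_contra hne
          exact hmemK3 p.1 p.2 t ht (support_fderiv_subset ℝ hne)
        rw [hz, ContinuousLinearMap.zero_comp]; refine ContinuousLinearMap.ext fun v => ?_; simp
    have hcd_int : ∀ (p : ℝ × ℝ) (v : ℝ × ℝ × ℝ),
        Integrable (fun t => c t * fderiv ℝ φ (p.1, p.2, t) v) := by
      intro p v
      apply Continuous.integrable_of_hasCompactSupport
      · exact hc_cont.mul ((hfdc.clm_apply continuous_const).comp (hιc p.1 p.2))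
      · apply HasCompactSupport.intro hK3
        intro t ht
        have hz : fderiv ℝ φ (p.1, p.2, t) = 0 := by
          by_contra hne
          exact hmemK3 p.1 p.2 t ht (support_fderiv_subset ℝ hne)
        simp [hz]
    have hLapply : ∀ (p : ℝ × ℝ) (a b : ℝ),
        L p (a, b) = ∫ t : ℝ, c t * fderiv ℝ φ (p.1, p.2, t) (a, b, 0) := by
      intro p a b
      rw [hLdef]
      rw [ContinuousLinearMap.integral_apply (hF'int p)]
      rfl
    have hrel : ∀ p : ℝ × ℝ, L p (1, 0) + Complex.I * L p (0, 1)
        = -((4 * π * τ : ℝ) : ℂ) * ((p.1 : ℂ) + (p.2 : ℂ) * Complex.I) * Ψ p := by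
      intro p
      rw [hLapply p 1 0, hLapply p 0 1, ← MeasureTheory.integral_const_mul,
        ← MeasureTheory.integral_add (hcd_int p _) ((hcd_int p _).const_mul _)]
      have hsum : ∀ t : ℝ, c t * fderiv ℝ φ (p.1, p.2, t) (1, 0, 0)
            + Complex.I * (c t * fderiv ℝ φ (p.1, p.2, t) (0, 1, 0))
          = (2 * Complex.I * ((p.1 : ℂ) + Complex.I * (p.2 : ℂ)))
            * (c t * fderiv ℝ φ (p.1, p.2, t) (0, 0, 1)) := by
        intro t
        have hh := h (p.1, p.2, t)
        simp only at hh
        linear_combination (c t) * hh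
      simp_rw [hsum]
      rw [MeasureTheory.integral_const_mul]
      have hfi : (∫ t : ℝ, c t * fderiv ℝ φ (p.1, p.2, t) (0, 0, 1))
          = 𝓕 (fun t => fderiv ℝ φ (p.1, p.2, t) (0, 0, 1)) τ := by
        rw [Real.fourier_eq']
        congr 1
        ext v; simp only [hcdef, smul_eq_mul, RCLike.inner_apply, conj_trivial, mul_comm]
      rw [hfi, key1 p.1 p.2 τ, smul_eq_mul]
      have hΨp : 𝓕 (fun t => φ (p.1, p.2, t)) τ = Ψ p := rfl
      rw [hΨp]
      push_cast
      linear_combination (4 * (π:ℂ) * (τ:ℂ) * Ψ p * ((p.1:ℂ) + Complex.I * (p.2:ℂ)))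
        * Complex.I_sq
    have hdiff := lewy_cr hΨ hrel
    obtain ⟨R, hR⟩ := h2.isBounded.subset_closedBall 0
    have hΨout : ∀ x y : ℝ, R < |x| → Ψ (x, y) = 0 := by
      intro x y hx
      have hzero : (fun t => φ (x, y, t)) = (fun _ => (0 : ℂ)) := by
        funext t
        by_contra hne
        have hmem : (x, y, t) ∈ tsupport φ := subset_tsupport _ hne
        have := hR hmem
        rw [mem_closedBall_zero_iff] at this
        have h2' : |x| ≤ ‖((x, y, t) : ℝ × ℝ × ℝ)‖ := by
          have := norm_fst_le ((x, y, t) : ℝ × ℝ × ℝ)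
          rwa [Real.norm_eq_abs] at this
        linarith
      have : Ψ (x, y) = 𝓕 (fun t => φ (x, y, t)) τ := rfl
      rw [this, hzero, Real.fourier_eq]
      simp
    have hev : (fun w : ℂ => Ψ (w.re, w.im) * Complex.exp (((2 * π * τ : ℝ) : ℂ)
        * ((w.re : ℂ) * (w.re : ℂ) + (w.im : ℂ) * (w.im : ℂ))))
        =ᶠ[nhds ((R + 1 : ℝ) : ℂ)] 0 := by
      apply Filter.eventually_of_mem (Metric.ball_mem_nhds _ one_pos)
      intro w hw
      have hre : |w.re - (R + 1)| < 1 := by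
        have h1' : |(w - ((R + 1 : ℝ) : ℂ)).re| ≤ ‖w - ((R + 1 : ℝ) : ℂ)‖ :=
          Complex.abs_re_le_norm _
        have h2' : ‖w - ((R + 1 : ℝ) : ℂ)‖ < 1 := by
          rwa [mem_ball, Complex.dist_eq] at hw
        simp only [Complex.sub_re, Complex.ofReal_re] at h1'
        linarith
      have hgt : R < |w.re| := by
        rcases abs_lt.1 hre with ⟨ha, hb⟩
        have : R < w.re := by linarith
        exact lt_of_lt_of_le this (le_abs_self _)
      show Ψ (w.re, w.im) * _ = 0
      rw [hΨout w.re w.im hgt, zero_mul]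
    have hEq := ((hdiff.differentiableOn).analyticOnNhd
      isOpen_univ).eqOn_zero_of_preconnected_of_eventuallyEq_zero
      isPreconnected_univ (mem_univ _) hev
    intro x y
    have hgx := hEq (mem_univ (⟨x, y⟩ : ℂ))
    have hgx' : Ψ (x, y) * Complex.exp (((2 * π * τ : ℝ) : ℂ)
        * ((x : ℂ) * (x : ℂ) + (y : ℂ) * (y : ℂ))) = 0 := hgx
    rcases mul_eq_zero.1 hgx' with h0 | h0
    · exact h0
    · exact absurd h0 (Complex.exp_ne_zero _)
  -- Fourier inversion
  funext q
  have hz : 𝓕 (fun t => φ (q.1, q.2.1, t)) = (fun _ => (0 : ℂ)) :=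
    funext fun τ => main τ q.1 q.2.1
  have hinv := (hslice_cont q.1 q.2.1).fourierInv_fourier_eq (hslice_int q.1 q.2.1)
    (by rw [hz]; exact integrable_zero _ _ _)
  have hfin : φ (q.1, q.2.1, q.2.2) = 0 := by
    have := congrFun hinv q.2.2
    rw [hz] at this
    rw [← this, Real.fourierInv_eq]
    simp
  simpa using hfin
end

section
/- Every nonzero constant-coefficient linear differential operator in one variable is injective on complex test functions: if P is a nonzero polynomial with complex coefficients and φ : ℝ → ℂ is infinitely differentiable with compact support such that the function Σ_{k=0}^{deg P} (coeff k of P) · φ^(k) vanishes identically on ℝ, then φ = 0. -/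
open MeasureTheory FourierTransform Real Complex Finset

theorem stmt_17 (P : Polynomial ℂ) (hP : P ≠ 0) (φ : ℝ → ℂ)
    (h1 : ContDiff ℝ (⊤ : ℕ∞) φ) (h2 : HasCompactSupport φ)
    (h : ∀ x : ℝ,
      ∑ k ∈ Finset.range (P.natDegree + 1), P.coeff k * iteratedDeriv k φ x = 0) :
    φ = 0 := by
  -- compact support of iterated derivatives
  have hcs : ∀ k : ℕ, HasCompactSupport (iteratedDeriv k φ) := by
    intro k
    induction k with
    | zero => simpa [iteratedDeriv_zero] using h2
    | succ n ih => rw [iteratedDeriv_succ]; exact ih.deriv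
  have hint : ∀ k : ℕ, Integrable (iteratedDeriv k φ) := fun k =>
    (h1.continuous_iteratedDeriv k (by exact_mod_cast le_top)).integrable_of_hasCompactSupport (hcs k)
  have hφint : Integrable φ := by simpa using hint 0
  -- integrability of char-twisted integrands
  have hchar : ∀ w : ℝ, ∀ g : ℝ → ℂ, Integrable g →
      Integrable (fun v : ℝ => (Real.fourierChar (-(v * w)) : ℂ) * g v) := by
    intro w g hg
    apply hg.bdd_mul (c := 1)
    · apply Continuous.aestronglyMeasurable
      continuity
    · exact Filter.Eventually.of_forall fun x => (Circle.norm_coe _).le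
  have e1 : ∀ k : ℕ, 𝓕 (iteratedDeriv k φ) =
      fun x : ℝ => (2 * π * Complex.I * x) ^ k • 𝓕 φ x :=
    fun k => Real.fourier_iteratedDeriv (N := (⊤ : ℕ∞)) (h1.of_le (by simp))
      (fun n _ => hint n) le_top
  have key : ∀ w : ℝ, Polynomial.eval (2 * π * Complex.I * w) P * 𝓕 φ w = 0 := by
    intro w
    have e2 : ∑ k ∈ Finset.range (P.natDegree + 1),
        P.coeff k * 𝓕 (iteratedDeriv k φ) w = 0 := by
      have := fun k => Real.fourier_real_eq (iteratedDeriv k φ) w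
      calc ∑ k ∈ Finset.range (P.natDegree + 1), P.coeff k * 𝓕 (iteratedDeriv k φ) w
          = ∑ k ∈ Finset.range (P.natDegree + 1),
              ∫ v : ℝ, (Real.fourierChar (-(v * w)) : ℂ) * (P.coeff k * iteratedDeriv k φ v) := by
            refine Finset.sum_congr rfl fun k _ => ?_
            rw [Real.fourier_real_eq, ← integral_const_mul]
            congr 1 with v
            simp [Circle.smul_def]
            ring
        _ = ∫ v : ℝ, ∑ k ∈ Finset.range (P.natDegree + 1),
              (Real.fourierChar (-(v * w)) : ℂ) * (P.coeff k * iteratedDeriv k φ v) := by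
            rw [integral_finset_sum]
            exact fun k _ => hchar w _ ((hint k).const_mul _)
        _ = ∫ v : ℝ, (Real.fourierChar (-(v * w)) : ℂ) *
              (∑ k ∈ Finset.range (P.natDegree + 1), P.coeff k * iteratedDeriv k φ v) := by
            congr 1 with v
            rw [Finset.mul_sum]
        _ = 0 := by simp [h]
    rw [Polynomial.eval_eq_sum_range, Finset.sum_mul]
    rw [← e2]
    refine Finset.sum_congr rfl fun k _ => ?_
    rw [e1 k]
    simp [smul_eq_mul]
    ring
  -- 𝓕 φ vanishes
  have hroots : {w : ℝ | Polynomial.eval (2 * π * Complex.I * w) P = 0}.Finite := by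
    have hfin := P.finite_setOf_isRoot hP
    have hinj : Function.Injective (fun w : ℝ => 2 * π * Complex.I * (w : ℝ)) := by
      intro a b hab
      simp only at hab
      have h2πI : (2 * π * Complex.I : ℂ) ≠ 0 := by
        simp [Real.pi_ne_zero, Complex.I_ne_zero]
      have := mul_left_cancel₀ h2πI hab
      exact_mod_cast this
    exact (hfin.preimage hinj.injOn)
  have hFcont : Continuous (𝓕 φ) :=
    VectorFourier.fourierIntegral_continuous Real.continuous_fourierChar
      (by exact continuous_inner) hφint
  have hF0 : 𝓕 φ = 0 := by
    have hdense : Dense {w : ℝ | Polynomial.eval (2 * π * Complex.I * w) P = 0}ᶜ :=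
      hroots.countable.dense_compl ℝ
    refine Continuous.ext_on hdense hFcont continuous_const ?_
    intro w hw
    simp only [Set.mem_compl_iff, Set.mem_setOf_eq] at hw
    have := key w
    have := (mul_eq_zero.1 this).resolve_left hw
    simpa using this
  have := (h1.continuous).fourierInv_fourier_eq hφint (by rw [hF0]; exact integrable_zero _ _ _)
  rw [hF0] at this
  rw [← this]
  ext v
  simp [Real.fourierInv_eq]
end
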